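/- arXiv:0805.1618 — 3 statements merged into one kernel-verified Lean document; each statement's English description precedes it below -/
import Mathlib

section
/- Let ω ≠ 0 and λ_j = λ_0 + jω for j = 0,…,n. Then the Bernstein basis functions with respect to a ≠ b satisfy p_{(λ_0,λ_1,…,λ_{n−1}),k} − p_{(λ_1,λ_2,…,λ_n),k} = −(k+1) ω · p_{(λ_0,λ_1,λ_2,…,λ_n),k+1}. -/
open Filter Topology Set

noncomputable section

/-- The differential operator `(d/dx − λ₀)⋯(d/dx − λₙ)` applied to `f`,
where `λ₀,…,λₙ` are the entries of the list. -/
def LOp : List ℂ → (ℝ → ℂ) → (ℝ → ℂ)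
  | [], f => f
  | c :: r, f => LOp r (fun x => deriv f x - c * f x)

/-- The space `E_Λ` of exponential polynomials with eigenvalue vector `l`. -/
def ExpPoly (l : List ℂ) : Set (ℝ → ℂ) :=
  {f | ContDiff ℝ (⊤ : ℕ∞) f ∧ LOp l f = 0}

/-- `f` has a zero of order (multiplicity) exactly `k` at `x₀`. -/
def HasZeroOfOrder (f : ℝ → ℂ) (x₀ : ℝ) (k : ℕ) : Prop :=
  (∀ j < k, iteratedDeriv j f x₀ = 0) ∧ iteratedDeriv k f x₀ ≠ 0

/-- `E_l` (with `l.length = n + 1`) is an extended Chebyshev system for `A ⊆ ℝ`: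
every nonzero member has at most `n` zeros in `A`, counted with multiplicity. -/
def IsExtChebyshev (l : List ℂ) (A : Set ℝ) : Prop :=
  ∀ f ∈ ExpPoly l, f ≠ 0 → ∀ (s : Finset ℝ) (m : ℝ → ℕ),
    (↑s : Set ℝ) ⊆ A → (∀ x ∈ s, ∀ j < m x, iteratedDeriv j f x = 0) →
    ∑ x ∈ s, m x ≤ l.length - 1

/-- `p k`, `k = 0,…,n` (with `l.length = n + 1`) is the normalized Bernstein basis of
`E_l` for the points `a ≠ b`: `p k` lies in `E_l`, has a zero of order exactly `k`
at `a`, a zero of order exactly `n − k` at `b`, and `(p k)^{(k)}(a) = 1`. -/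
def IsBernsteinBasis (l : List ℂ) (a b : ℝ) (p : ℕ → ℝ → ℂ) : Prop :=
  ∀ k ≤ l.length - 1,
    p k ∈ ExpPoly l ∧ HasZeroOfOrder (p k) a k ∧
      HasZeroOfOrder (p k) b (l.length - 1 - k) ∧ iteratedDeriv k (p k) a = 1

/-- `E_l` is closed under (pointwise) complex conjugation. -/
def ConjClosed (l : List ℂ) : Prop :=
  ∀ f ∈ ExpPoly l, (fun x => starRingEnd ℂ (f x)) ∈ ExpPoly l

/-!
The exponential polynomials for `λ_j = μ + jω`, `j < m`, are the functions `e^{μx} P(e^{ωx})`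
with `deg P < m`, and `d/dx` acts on `P` as `μP + ωXP'`. Since `e^{ωa} ≠ 0`, a zero of order `k`
at `a` makes `e^{ωa}` a root of `P` of multiplicity `k`. So the normalized Bernstein function is
`d e^{μx} (e^{ωx} - e^{ωa})^k (e^{ωx} - e^{ωb})^{m-1-k}` for an explicit constant `d`, and the
identity reduces to a relation between the three constants. The points `e^{ωa}`, `e^{ωb}` are
distinct because the first Bernstein function of the larger space vanishes at `b` but not at `a`.
-/

open Polynomial

namespace Polynomial

theorem exists_derivative_eq_of_degree_lt {K : Type*} [Field K] [CharZero K] {Q : K[X]} {m : ℕ}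
    (hQ : Q.degree < m) : ∃ R : K[X], R.degree < ↑(m + 1) ∧ derivative R = Q := by
  rcases eq_or_ne Q 0 with rfl | hQ0
  · exact ⟨0, by simp, derivative_zero⟩
  refine ⟨∑ i ∈ Finset.range m, C (Q.coeff i / (i + 1)) * X ^ (i + 1), ?_, ?_⟩
  · rw [← mem_degreeLT]
    refine Submodule.sum_mem _ fun i hi => mem_degreeLT.2 ?_
    refine (degree_C_mul_X_pow_le _ _).trans_lt ?_
    exact_mod_cast Nat.succ_lt_succ (Finset.mem_range.1 hi)
  · conv_rhs => rw [as_sum_range_C_mul_X_pow' Q ((natDegree_lt_iff_degree_lt hQ0).2 hQ)]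
    refine (map_sum _ _ _).trans (Finset.sum_congr rfl fun i _ => ?_)
    rw [derivative_C_mul_X_pow, Nat.add_sub_cancel, Nat.cast_add_one,
      div_mul_cancel₀ _ (Nat.cast_add_one_ne_zero i)]

theorem exists_eq_C_mul_X_sub_C_pow_mul_X_sub_C_pow {K : Type*} [Field K] {P : K[X]} {u v : K}
    (huv : u ≠ v) {k j : ℕ} (hdeg : P.degree ≤ ↑(k + j)) (hu : (X - C u) ^ k ∣ P)
    (hv : (X - C v) ^ j ∣ P) : ∃ d, P = C d * (X - C u) ^ k * (X - C v) ^ j := by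
  have hcop : IsCoprime ((X - C u) ^ k) ((X - C v) ^ j) :=
    (isCoprime_X_sub_C_of_isUnit_sub (sub_ne_zero.2 huv).isUnit).pow
  obtain ⟨D, rfl⟩ := hcop.mul_dvd hu hv
  suffices D.degree ≤ 0 from ⟨D.coeff 0, by rw [← eq_C_of_degree_le_zero this]; ring⟩
  rw [degree_mul, degree_mul, degree_pow, degree_pow, degree_X_sub_C, degree_X_sub_C,
    nsmul_one, nsmul_one, Nat.cast_add] at hdeg
  exact WithBot.le_of_add_le_add_left (by simp) (hdeg.trans_eq (add_zero _).symm)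

end Polynomial

section ExpPolyDeriv

variable {R : Type*}

def expPolyDeriv [CommSemiring R] (μ ω : R) (P : R[X]) : R[X] := C μ * P + C ω * X * derivative P

variable [CommRing R] {μ ω u : R}

theorem exists_expPolyDeriv_X_sub_C_pow_succ_mul (m : ℕ) (Q : R[X]) :
    ∃ S : R[X], expPolyDeriv μ ω ((X - C u) ^ (m + 1) * Q) = (X - C u) ^ m * S ∧
      S.eval u = (m + 1) * ω * u * Q.eval u := by
  refine ⟨C μ * (X - C u) * Q + C ω * X * (C ((m : R) + 1) * Q + (X - C u) * derivative Q),
    ?_, ?_⟩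
  · simp only [expPolyDeriv, derivative_mul, derivative_pow, derivative_X_sub_C, C_add, C_1,
      Nat.add_sub_cancel, Nat.cast_add_one]
    ring
  · simp only [eval_add, eval_mul, eval_C, eval_sub, eval_X, sub_self, mul_zero, zero_mul,
      add_zero, zero_add]
    ring

theorem eval_iterate_expPolyDeriv_X_sub_C_pow_mul (k : ℕ) (Q : R[X]) :
    ((expPolyDeriv μ ω)^[k] ((X - C u) ^ k * Q)).eval u =
      k.factorial * ω ^ k * u ^ k * Q.eval u := by
  induction k generalizing Q with
  | zero => simp
  | succ k ih =>
    obtain ⟨S, hS, hSu⟩ := exists_expPolyDeriv_X_sub_C_pow_succ_mul (μ := μ) (ω := ω) k Q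
    rw [Function.iterate_succ_apply, hS, ih, hSu, Nat.factorial_succ]
    push_cast
    ring

theorem X_sub_C_pow_dvd_of_eval_iterate_expPolyDeriv [IsDomain R] [CharZero R] (hω : ω ≠ 0)
    (hu : u ≠ 0) {P : R[X]} {k : ℕ} (h : ∀ i < k, ((expPolyDeriv μ ω)^[i] P).eval u = 0) :
    (X - C u) ^ k ∣ P := by
  induction k with
  | zero => exact one_dvd P
  | succ k ih =>
    obtain ⟨Q, rfl⟩ := ih fun i hi => h i (by omega)
    have hQ : Q.IsRoot u := by
      simpa [eval_iterate_expPolyDeriv_X_sub_C_pow_mul, hω, hu, Nat.factorial_ne_zero]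
        using h k k.lt_succ_self
    obtain ⟨Q', rfl⟩ := dvd_iff_isRoot.2 hQ
    exact ⟨Q', by ring⟩

end ExpPolyDeriv

open scoped Complex

def expPolyFun (μ ω : ℂ) (P : ℂ[X]) (x : ℝ) : ℂ := cexp (μ * x) * P.eval (cexp (ω * x))

section expPolyFun

variable {μ ω : ℂ}

theorem hasDerivAt_expPolyFun (P : ℂ[X]) (x : ℝ) :
    HasDerivAt (expPolyFun μ ω P) (expPolyFun μ ω (expPolyDeriv μ ω P) x) x := by
  have hexp (c : ℂ) : HasDerivAt (fun y : ℝ => cexp (c * y)) (cexp (c * x) * c) x := by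
    simpa using ((hasDerivAt_id (x : ℂ)).const_mul c).cexp.comp_ofReal
  refine ((hexp μ).mul ((P.hasDerivAt _).comp x (hexp ω))).congr_deriv ?_
  simp only [expPolyFun, expPolyDeriv, eval_add, eval_mul, eval_C, eval_X, Function.comp_apply]
  ring

theorem iteratedDeriv_expPolyFun (i : ℕ) (P : ℂ[X]) :
    iteratedDeriv i (expPolyFun μ ω P) = expPolyFun μ ω ((expPolyDeriv μ ω)^[i] P) := by
  induction i generalizing P with
  | zero => rfl
  | succ i ih =>
    rw [iteratedDeriv_succ', Function.iterate_succ_apply, ← ih]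
    exact congrArg _ (funext fun x => (hasDerivAt_expPolyFun P x).deriv)

theorem expPolyFun_X_mul (P : ℂ[X]) : expPolyFun μ ω (X * P) = expPolyFun (μ + ω) ω P := by
  ext x
  simp only [expPolyFun, eval_mul, eval_X, add_mul, Complex.exp_add]
  ring

theorem expPolyFun_add (P Q : ℂ[X]) :
    expPolyFun μ ω (P + Q) = expPolyFun μ ω P + expPolyFun μ ω Q := by
  ext x
  simp only [expPolyFun, eval_add, Pi.add_apply]
  ring

theorem expPolyFun_C (c : ℂ) (x : ℝ) : expPolyFun μ ω (C c) x = c * cexp (μ * x) := by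
  rw [expPolyFun, eval_C, mul_comm]

end expPolyFun

theorem eq_mul_cexp_of_hasDerivAt {μ : ℂ} {h : ℝ → ℂ} (hd : ∀ x, HasDerivAt h (μ * h x) x)
    (x : ℝ) : h x = h 0 * cexp (μ * x) := by
  have hconst (y : ℝ) : HasDerivAt (fun y : ℝ => cexp (-μ * y) * h y) 0 y := by
    have he : HasDerivAt (fun y : ℝ => cexp (-μ * y)) (cexp (-μ * y) * -μ) y := by
      simpa using ((hasDerivAt_id (y : ℂ)).const_mul (-μ)).cexp.comp_ofReal
    exact (he.mul (hd y)).congr_deriv (by ring)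
  have := is_const_of_deriv_eq_zero (fun y => (hconst y).differentiableAt)
    (fun y => (hconst y).deriv) x 0
  simp only [Complex.ofReal_zero, mul_zero, Complex.exp_zero, one_mul] at this
  rw [← this, mul_comm, ← mul_assoc, ← Complex.exp_add]
  simp

def equidistant (μ ω : ℂ) (m : ℕ) : List ℂ := List.ofFn fun j : Fin m => μ + ((j : ℕ) : ℂ) * ω

@[simp]
theorem length_equidistant (μ ω : ℂ) (m : ℕ) : (equidistant μ ω m).length = m :=
  List.length_ofFn

theorem equidistant_succ (μ ω : ℂ) (m : ℕ) :
    equidistant μ ω (m + 1) = μ :: equidistant (μ + ω) ω m := by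
  simp only [equidistant, List.ofFn_succ, Fin.val_zero, Fin.val_succ, Nat.cast_zero, zero_mul,
    add_zero, Nat.cast_add_one, List.cons.injEq, true_and]
  exact congrArg List.ofFn (funext fun j => by ring)

theorem exists_eq_expPolyFun_of_mem_expPoly {ω : ℂ} (hω : ω ≠ 0) {m : ℕ} {μ : ℂ} {f : ℝ → ℂ}
    (hf : f ∈ ExpPoly (equidistant μ ω m)) : ∃ P : ℂ[X], P.degree < m ∧ f = expPolyFun μ ω P := by
  induction m generalizing μ f with
  | zero =>
    obtain rfl : f = 0 := hf.2
    exact ⟨0, by simp, by ext; simp [expPolyFun]⟩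
  | succ m ih =>
    obtain ⟨hsmooth, hL⟩ := hf
    rw [equidistant_succ, LOp] at hL
    set g : ℝ → ℂ := fun x => deriv f x - μ * f x
    obtain ⟨Q, hQdeg, hgQ⟩ := ih (f := g)
      ⟨(contDiff_infty_iff_deriv.1 hsmooth).2.sub (contDiff_const.mul hsmooth), hL⟩
    obtain ⟨R, hRdeg, hRQ⟩ := exists_derivative_eq_of_degree_lt hQdeg
    set f₀ := expPolyFun μ ω (C ω⁻¹ * R)
    have hf₀ : expPolyDeriv μ ω (C ω⁻¹ * R) = C μ * (C ω⁻¹ * R) + X * Q := by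
      have hωω : C ω * C ω⁻¹ = (1 : ℂ[X]) := by rw [← C_mul, mul_inv_cancel₀ hω, C_1]
      rw [expPolyDeriv, derivative_C_mul, hRQ]
      linear_combination (X * Q) * hωω
    have hd (x : ℝ) : HasDerivAt (f - f₀) (μ * (f - f₀) x) x := by
      have hf' : HasDerivAt f (μ * f x + g x) x :=
        (hsmooth.differentiable (by simp) x).hasDerivAt.congr_deriv (by simp [g])
      refine (hf'.sub (hasDerivAt_expPolyFun _ x)).congr_deriv ?_
      rw [hf₀, expPolyFun_add, expPolyFun_X_mul, ← hgQ]
      simp only [Pi.add_apply, Pi.sub_apply, expPolyFun, eval_mul, eval_C, f₀]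
      ring
    refine ⟨C ((f - f₀) 0) + C ω⁻¹ * R, ?_, ?_⟩
    · refine (degree_add_le _ _).trans_lt (max_lt (degree_C_le.trans_lt ?_) ?_)
      · exact_mod_cast m.succ_pos
      · rwa [degree_C_mul (inv_ne_zero hω)]
    · ext x
      rw [expPolyFun_add, Pi.add_apply, expPolyFun_C, ← eq_mul_cexp_of_hasDerivAt hd, Pi.sub_apply,
        sub_add_cancel]

theorem IsBernsteinBasis.cexp_mul_ne {μ ω : ℂ} (hω : ω ≠ 0) {m : ℕ} (hm : m ≠ 0) {a b : ℝ}
    {p : ℕ → ℝ → ℂ} (hp : IsBernsteinBasis (equidistant μ ω (m + 1)) a b p) :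
    cexp (ω * a) ≠ cexp (ω * b) := by
  obtain ⟨hmem, ⟨-, ha⟩, ⟨hb, -⟩, -⟩ := hp 0 (Nat.zero_le _)
  obtain ⟨P, -, hP⟩ := exists_eq_expPolyFun_of_mem_expPoly hω hmem
  have hb0 := hb 0 (by simpa [Nat.pos_iff_ne_zero])
  simp only [iteratedDeriv_zero, hP, expPolyFun] at ha hb0
  intro hab
  rw [hab, (mul_eq_zero.1 hb0).resolve_left (Complex.exp_ne_zero _), mul_zero] at ha
  exact ha rfl

theorem IsBernsteinBasis.exists_eq_expPolyFun {μ ω : ℂ} (hω : ω ≠ 0) {m k : ℕ} (hk : k < m)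
    {a b : ℝ} {p : ℕ → ℝ → ℂ} (hp : IsBernsteinBasis (equidistant μ ω m) a b p)
    (hab : cexp (ω * a) ≠ cexp (ω * b)) :
    ∃ d : ℂ, cexp (μ * a) * k.factorial * ω ^ k * cexp (ω * a) ^ k *
        (cexp (ω * a) - cexp (ω * b)) ^ (m - 1 - k) * d = 1 ∧
      p k = expPolyFun μ ω (C d * (X - C (cexp (ω * a))) ^ k *
        (X - C (cexp (ω * b))) ^ (m - 1 - k)) := by
  obtain ⟨hmem, ⟨ha, -⟩, ⟨hb, -⟩, hnorm⟩ := hp k (by simp; omega)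
  rw [length_equidistant] at hb
  obtain ⟨P, hPdeg, hP⟩ := exists_eq_expPolyFun_of_mem_expPoly hω hmem
  have hroot (x : ℝ) (i : ℕ) (hi : iteratedDeriv i (p k) x = 0) :
      ((expPolyDeriv μ ω)^[i] P).eval (cexp (ω * x)) = 0 := by
    rw [hP, iteratedDeriv_expPolyFun, expPolyFun] at hi
    exact (mul_eq_zero.1 hi).resolve_left (Complex.exp_ne_zero _)
  rw [show m = k + (m - 1 - k) + 1 by omega] at hPdeg
  obtain ⟨d, rfl⟩ := exists_eq_C_mul_X_sub_C_pow_mul_X_sub_C_pow hab (Order.le_of_lt_succ hPdeg)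
    (X_sub_C_pow_dvd_of_eval_iterate_expPolyDeriv hω (Complex.exp_ne_zero _)
      fun i hi => hroot a i (ha i hi))
    (X_sub_C_pow_dvd_of_eval_iterate_expPolyDeriv hω (Complex.exp_ne_zero _)
      fun i hi => hroot b i (hb i hi))
  refine ⟨d, ?_, hP⟩
  rw [hP, mul_right_comm, mul_comm, iteratedDeriv_expPolyFun, expPolyFun,
    eval_iterate_expPolyDeriv_X_sub_C_pow_mul] at hnorm
  rw [← hnorm]
  simp only [eval_mul, eval_pow, eval_sub, eval_X, eval_C]
  ring

theorem equidistant_bernstein_difference_general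
    (n : ℕ) (lam0 ω : ℂ) (hω : ω ≠ 0) (a b : ℝ)
    (p01 p12 pfull : ℕ → ℝ → ℂ)
    (hp01 : IsBernsteinBasis (List.ofFn fun j : Fin n => lam0 + ((j : ℕ) : ℂ) * ω) a b p01)
    (hp12 : IsBernsteinBasis
      (List.ofFn fun j : Fin n => lam0 + (((j : ℕ) : ℂ) + 1) * ω) a b p12)
    (hpfull : IsBernsteinBasis
      (List.ofFn fun j : Fin (n + 1) => lam0 + ((j : ℕ) : ℂ) * ω) a b pfull) :
    ∀ k < n, ∀ x : ℝ,
      p01 k x - p12 k x = -(((k : ℂ) + 1) * ω) * pfull (k + 1) x := by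
  intro k hk x
  have hl12 : (List.ofFn fun j : Fin n => lam0 + (((j : ℕ) : ℂ) + 1) * ω) =
      equidistant (lam0 + ω) ω n :=
    congrArg List.ofFn (funext fun j => by ring)
  rw [hl12] at hp12
  have huv := hpfull.cexp_mul_ne hω (by omega)
  obtain ⟨d₁, hd₁, h₁⟩ := hp01.exists_eq_expPolyFun hω hk huv
  obtain ⟨d₂, hd₂, h₂⟩ := hp12.exists_eq_expPolyFun hω hk huv
  obtain ⟨d₃, hd₃, h₃⟩ := hpfull.exists_eq_expPolyFun hω (by omega : k + 1 < n + 1) huv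
  set u := cexp (ω * a)
  set v := cexp (ω * b)
  rw [add_mul, Complex.exp_add] at hd₂
  rw [Nat.factorial_succ, show n + 1 - 1 - (k + 1) = n - 1 - k by omega] at hd₃
  push_cast at hd₃
  have hd₁₂ : d₁ = u * d₂ := by linear_combination (-d₁) * hd₂ + (u * d₂) * hd₁
  have hd₂₃ : ((k : ℂ) + 1) * ω * d₃ = d₂ := by
    linear_combination (-(((k : ℂ) + 1) * ω * d₃)) * hd₂ + d₂ * hd₃
  rw [h₁, h₂, h₃, ← expPolyFun_X_mul, show n + 1 - 1 - (k + 1) = n - 1 - k by omega]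
  simp only [expPolyFun, eval_mul, eval_pow, eval_sub, eval_X, eval_C]
  set t := cexp (ω * x)
  linear_combination cexp (lam0 * x) * (t - u) ^ k * (t - v) ^ (n - 1 - k) * hd₁₂ +
    cexp (lam0 * x) * (t - u) ^ (k + 1) * (t - v) ^ (n - 1 - k) * hd₂₃

/-- **Lemma (equidistant eigenvalues).** Let `ω ≠ 0` and `λ_j = λ_0 + jω` for
`j = 0,…,n`.  Then the Bernstein basis functions with respect to `a ≠ b` satisfy
`p_{(λ_0,…,λ_{n−1}),k} − p_{(λ_1,…,λ_n),k} = −(k+1) ω · p_{(λ_0,λ_1,…,λ_n),k+1}`. -/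
theorem equidistant_bernstein_difference
    (n : ℕ) (hn : 1 ≤ n) (lam0 ω : ℂ) (hω : ω ≠ 0) (a b : ℝ) (hab : a ≠ b)
    (p01 p12 pfull : ℕ → ℝ → ℂ)
    (hp01 : IsBernsteinBasis (List.ofFn fun j : Fin n => lam0 + ((j : ℕ) : ℂ) * ω) a b p01)
    (hp12 : IsBernsteinBasis
      (List.ofFn fun j : Fin n => lam0 + (((j : ℕ) : ℂ) + 1) * ω) a b p12)
    (hpfull : IsBernsteinBasis
      (List.ofFn fun j : Fin (n + 1) => lam0 + ((j : ℕ) : ℂ) * ω) a b pfull) :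
    ∀ k < n, ∀ x : ℝ,
      p01 k x - p12 k x = -(((k : ℂ) + 1) * ω) * pfull (k + 1) x :=
  equidistant_bernstein_difference_general n lam0 ω hω a b p01 p12 pfull hp01 hp12 hpfull
end
end

section
/- Let γ > 0. For each n ∈ ℕ and each j = 0,…,n, let a(n,j) ∈ (0,1) and b(n,j) > 0 be real numbers. Suppose that log b(n,j) / log a(n,j) → γ as n → ∞, uniformly in j (i.e. for every ε > 0 there is n_0 such that |log b(n,j)/log a(n,j) − γ| < ε for all n ≥ n_0 and all j = 0,…,n). Define A_k(n) := ∏_{j=k}^{n} a(n,j) and B_k(n) := ∏_{j=k}^{n} b(n,j). Then A_k(n)^γ − B_k(n) → 0 as n → ∞, uniformly in k (i.e. for every ε > 0 there is n_0 such that |A_k(n)^γ − B_k(n)| < ε for all n ≥ n_0 and all k = 0,…,n). -/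
/-!
Write `S = ∑ log a(n,j)` and `T = ∑ log b(n,j)`, so that `A_k(n)^γ = exp (γ S)` and
`B_k(n) = exp T`. Uniform convergence of the ratios gives `|T - γ S| ≤ δ |S|` with `δ` small,
and since `S ≤ 0` both exponents are at most `γ S / 2`. The mean value bound for `exp` then
gives `|exp (γ S) - exp T| ≤ δ |S| exp (-γ |S| / 2) ≤ 2 δ / γ`, uniformly in the length of
the product.
-/

open Real Finset

lemma Real.abs_exp_sub_exp_le_exp_max_mul (x y : ℝ) :
    |exp x - exp y| ≤ exp (max x y) * |x - y| := by
  wlog hxy : x ≤ y generalizing x y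
  · simpa only [abs_sub_comm, max_comm] using this y x (le_of_not_ge hxy)
  have hexp : exp x = exp y * exp (x - y) := by rw [← exp_add, add_sub_cancel]
  have hlin : 1 + (x - y) ≤ exp (x - y) := by linarith [add_one_le_exp (x - y)]
  rw [max_eq_right hxy, abs_of_nonpos (sub_nonpos.2 (exp_le_exp.2 hxy)),
    abs_of_nonpos (sub_nonpos.2 hxy)]
  nlinarith [exp_pos y]

lemma Real.mul_exp_neg_mul_le {c : ℝ} (hc : 0 < c) (t : ℝ) :
    t * exp (-(c * t)) ≤ 1 / c := by
  rw [le_div_iff₀ hc]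
  calc t * exp (-(c * t)) * c = c * t * exp (-(c * t)) := by ring
    _ ≤ exp (-1) := mul_exp_neg_le_exp_neg_one (c * t)
    _ ≤ 1 := exp_le_one_iff.2 (by norm_num)

lemma Real.abs_exp_mul_sub_exp_le {γ δ x y : ℝ} (hγ : 0 < γ) (hδ₀ : 0 ≤ δ) (hδ : δ ≤ γ / 2)
    (hx : x ≤ 0) (hy : |y - γ * x| ≤ δ * -x) :
    |exp (γ * x) - exp y| ≤ 2 * δ / γ := by
  have hmax : max (γ * x) y ≤ γ / 2 * x := by
    refine max_le (by nlinarith) ?_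
    nlinarith [(abs_le.1 hy).2]
  calc |exp (γ * x) - exp y|
      ≤ exp (max (γ * x) y) * |γ * x - y| := abs_exp_sub_exp_le_exp_max_mul _ _
    _ ≤ exp (-(γ / 2 * -x)) * (δ * -x) := by
        rw [mul_neg, neg_neg, abs_sub_comm]
        gcongr
    _ = δ * (-x * exp (-(γ / 2 * -x))) := by ring
    _ ≤ δ * (1 / (γ / 2)) := by gcongr; exact mul_exp_neg_mul_le (by positivity) _
    _ = 2 * δ / γ := by field_simp

lemma abs_sum_sub_mul_sum_le {ι : Type*} (s : Finset ι) {u v : ι → ℝ} {γ δ : ℝ}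
    (hu : ∀ i ∈ s, u i < 0) (huv : ∀ i ∈ s, |v i / u i - γ| ≤ δ) :
    |∑ i ∈ s, v i - γ * ∑ i ∈ s, u i| ≤ δ * -∑ i ∈ s, u i := by
  rw [mul_sum, ← sum_sub_distrib, ← sum_neg_distrib, mul_sum]
  refine (abs_sum_le_sum_abs _ _).trans (sum_le_sum fun i hi => ?_)
  have hvu : v i - γ * u i = (v i / u i - γ) * u i := by
    field_simp [(hu i hi).ne]
  rw [hvu, abs_mul, abs_of_neg (hu i hi)]
  exact mul_le_mul_of_nonneg_right (huv i hi) (neg_nonneg.2 (hu i hi).le)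

lemma Real.prod_eq_exp_sum_log {ι : Type*} {s : Finset ι} {f : ι → ℝ} (hf : ∀ i ∈ s, 0 < f i) :
    ∏ i ∈ s, f i = exp (∑ i ∈ s, log (f i)) := by
  rw [exp_sum]
  exact prod_congr rfl fun i hi => (exp_log (hf i hi)).symm

/-- **Lemma.** Let `γ > 0`.  For each `n ∈ ℕ` and `j = 0,…,n` let
`a(n,j) ∈ (0,1)` and `b(n,j) > 0`, and suppose `log b(n,j) / log a(n,j) → γ` as
`n → ∞`, uniformly in `j`.  With `A_k(n) = ∏_{j=k}^n a(n,j)` and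
`B_k(n) = ∏_{j=k}^n b(n,j)`, one has `A_k(n)^γ − B_k(n) → 0` as `n → ∞`,
uniformly in `k`. -/
theorem products_convergence_lemma
    (γ : ℝ) (hγ : 0 < γ) (a b : ℕ → ℕ → ℝ)
    (ha : ∀ n, ∀ j ≤ n, a n j ∈ Set.Ioo (0 : ℝ) 1)
    (hb : ∀ n, ∀ j ≤ n, 0 < b n j)
    (hconv : ∀ ε > 0, ∃ n₀ : ℕ, ∀ n ≥ n₀, ∀ j ≤ n,
      |Real.log (b n j) / Real.log (a n j) - γ| < ε) :
    ∀ ε > 0, ∃ n₀ : ℕ, ∀ n ≥ n₀, ∀ k ≤ n,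
      |(∏ j ∈ Finset.Icc k n, a n j) ^ γ - ∏ j ∈ Finset.Icc k n, b n j| < ε := by
  intro ε hε
  set δ := min (γ / 2) (ε * γ / 4)
  have hδ : 0 < δ := lt_min (by positivity) (by positivity)
  obtain ⟨n₀, hn₀⟩ := hconv δ hδ
  refine ⟨n₀, fun n hn k _ => ?_⟩
  have ha' : ∀ j ∈ Icc k n, a n j ∈ Set.Ioo 0 1 := fun j hj => ha n j (mem_Icc.1 hj).2
  have hlog_a : ∀ j ∈ Icc k n, log (a n j) < 0 := fun j hj => log_neg (ha' j hj).1 (ha' j hj).2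
  rw [prod_eq_exp_sum_log fun j hj => (ha' j hj).1,
    prod_eq_exp_sum_log fun j hj => hb n j (mem_Icc.1 hj).2, ← exp_mul, mul_comm]
  calc _ ≤ 2 * δ / γ :=
        abs_exp_mul_sub_exp_le hγ hδ.le (min_le_left _ _)
          (sum_nonpos fun j hj => (hlog_a j hj).le)
          (abs_sum_sub_mul_sum_le _ hlog_a fun j hj => (hn₀ n hn j (mem_Icc.1 hj).2).le)
    _ ≤ 2 * (ε * γ / 4) / γ := by gcongr; exact min_le_right _ _
    _ < ε := by field_simp; linarith
end

section
/- Let λ_j = λ_0 + jω for j = 0,…,n, where ω ≠ 0, and let p_{(λ_0,…,λ_n),k} be the explicit equidistant Bernstein basis for a ≠ b. Define t_k := a + (k/n)(b−a). Then the operator defined for f ∈ C[a,b] by B f(x) = Σ_{k=0}^{n} f(t_k) · (n!/(n−k)!) · (ω^k e^{−λ_0 (k/n)(b−a)} / (e^{ω(b−a)} − 1)^k) · p_{(λ_0,…,λ_n),k}(x) satisfies B(e^{λ_0 x}) = e^{λ_0 x} and B(e^{λ_n x}) = e^{λ_n x}. -/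
open Filter Topology Set

noncomputable section

/-- The explicit Bernstein basis for equidistant eigenvalues `λ_j = λ_0 + jω`. -/
def equidistantBernstein (n : ℕ) (lam0 ω : ℂ) (a b : ℝ) (k : ℕ) (x : ℝ) : ℂ :=
  Complex.exp (lam0 * ((x : ℂ) - (a : ℂ))) / ((k.factorial : ℂ) * ω ^ k) *
    (Complex.exp (ω * ((x : ℂ) - (a : ℂ))) - 1) ^ k *
    ((1 - Complex.exp (ω * ((x : ℂ) - (b : ℂ)))) /
      (1 - Complex.exp (ω * ((a : ℂ) - (b : ℂ))))) ^ (n - k)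

/-!
Put `E = e^{ω(b-a)}`, `X = e^{ω(x-a)}`, `u = (X-1)/(E-1)` and `v = (E-X)/(E-1)`, so that
`u + v = 1`. The weights `c_k` are exactly what turns the `k`-th summand for `e^{λ₀ x}` into
`e^{λ₀ x} C(n,k) u^k v^{n-k}`, so that sum is `e^{λ₀ x} (u + v)^n` by the binomial theorem.
For `e^{λₙ x}` the extra factor `e^{nω t_k} = e^{nωa} E^k` gives `e^{λ₀ x} e^{nωa} (E u + v)^n`,
and `E u + v = X`.
-/

section

open Complex

variable {n : ℕ} {lam0 ω : ℂ} {a b : ℝ}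

lemma natCast_mul_div_natCast_of_le {K : Type*} [Field K] [CharZero K] {k : ℕ} (hk : k ≤ n) :
    (n : K) * (k / n) = k := by
  rcases eq_or_ne n 0 with rfl | hn
  · simp [Nat.le_zero.mp hk]
  · field_simp

lemma equidistantBernstein_eq (hne : exp (ω * (b - a)) ≠ 1) (k : ℕ) (x : ℝ) :
    equidistantBernstein n lam0 ω a b k x =
      exp (lam0 * (x - a)) / (k.factorial * ω ^ k) * (exp (ω * (x - a)) - 1) ^ k *
        ((exp (ω * (b - a)) - exp (ω * (x - a))) / (exp (ω * (b - a)) - 1)) ^ (n - k) := by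
  have hE1 : exp (ω * (b - a)) - 1 ≠ 0 := sub_ne_zero.mpr hne
  have hxb : exp (ω * (x - b)) = exp (ω * (x - a)) / exp (ω * (b - a)) := by
    rw [← exp_sub]; ring_nf
  have hab : exp (ω * (a - b)) = 1 / exp (ω * (b - a)) := by
    rw [one_div, ← exp_neg]; ring_nf
  rw [equidistantBernstein, hxb, hab]
  congr 2
  field_simp

lemma exp_mul_weight_mul_equidistantBernstein (hne : exp (ω * (b - a)) ≠ 1)
    {k : ℕ} (hk : k ≤ n) (x : ℝ) :
    exp (lam0 * ((a + k / n * (b - a) : ℝ) : ℂ)) *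
        ((n.factorial : ℂ) / (n - k).factorial *
          (ω ^ k * exp (-lam0 * ((k / n * (b - a) : ℝ) : ℂ)) / (exp (ω * (b - a)) - 1) ^ k)) *
        equidistantBernstein n lam0 ω a b k x =
      exp (lam0 * x) * ((exp (ω * (x - a)) - 1) / (exp (ω * (b - a)) - 1)) ^ k *
        ((exp (ω * (b - a)) - exp (ω * (x - a))) / (exp (ω * (b - a)) - 1)) ^ (n - k) *
          n.choose k := by
  have hω : ω ≠ 0 := by rintro rfl; simp at hne
  have hE1 : exp (ω * (b - a)) - 1 ≠ 0 := sub_ne_zero.mpr hne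
  have hexp : exp (lam0 * ((a + k / n * (b - a) : ℝ) : ℂ)) *
      exp (-lam0 * ((k / n * (b - a) : ℝ) : ℂ)) * exp (lam0 * (x - a)) = exp (lam0 * x) := by
    rw [← exp_add, ← exp_add]; push_cast; ring_nf
  rw [equidistantBernstein_eq hne, ← hexp, Nat.cast_choose ℂ hk]
  simp only [div_pow]
  field_simp

lemma sum_pow_mul_exp_mul_weight_mul_equidistantBernstein (hne : exp (ω * (b - a)) ≠ 1)
    {t : ℕ → ℝ} (ht : ∀ k, t k = a + ((k : ℝ) / (n : ℝ)) * (b - a)) {c : ℕ → ℂ}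
    (hc : ∀ k, c k = ((n.factorial : ℂ) / ((n - k).factorial : ℂ)) *
      (ω ^ k * exp (-lam0 * ((((k : ℝ) / (n : ℝ)) * (b - a) : ℝ) : ℂ)) /
        (exp (ω * ((b : ℂ) - (a : ℂ))) - 1) ^ k)) (z : ℂ) (x : ℝ) :
    ∑ k ∈ Finset.range (n + 1),
        z ^ k * (exp (lam0 * t k) * c k * equidistantBernstein n lam0 ω a b k x) =
      exp (lam0 * x) * (z * ((exp (ω * (x - a)) - 1) / (exp (ω * (b - a)) - 1)) +
        (exp (ω * (b - a)) - exp (ω * (x - a))) / (exp (ω * (b - a)) - 1)) ^ n := by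
  rw [add_pow, Finset.mul_sum]
  refine Finset.sum_congr rfl fun k hk => ?_
  rw [ht, hc, exp_mul_weight_mul_equidistantBernstein hne (Finset.mem_range_succ_iff.mp hk),
    mul_pow]
  ring

end

theorem equidistant_bernstein_operator_reproduces_general
    (n : ℕ) (lam0 ω : ℂ) (a b : ℝ)
    (hne : Complex.exp (ω * ((b : ℂ) - (a : ℂ))) ≠ 1)
    (t : ℕ → ℝ) (ht : ∀ k, t k = a + ((k : ℝ) / (n : ℝ)) * (b - a))
    (c : ℕ → ℂ)
    (hc : ∀ k, c k = ((n.factorial : ℂ) / ((n - k).factorial : ℂ)) *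
      (ω ^ k * Complex.exp (-lam0 * ((((k : ℝ) / (n : ℝ)) * (b - a) : ℝ) : ℂ)) /
        (Complex.exp (ω * ((b : ℂ) - (a : ℂ))) - 1) ^ k)) :
    (∀ x : ℝ, ∑ k ∈ Finset.range (n + 1),
        Complex.exp (lam0 * ((t k : ℝ) : ℂ)) * c k * equidistantBernstein n lam0 ω a b k x =
      Complex.exp (lam0 * (x : ℂ))) ∧
    (∀ x : ℝ, ∑ k ∈ Finset.range (n + 1),
        Complex.exp ((lam0 + (n : ℂ) * ω) * ((t k : ℝ) : ℂ)) * c k *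
          equidistantBernstein n lam0 ω a b k x =
      Complex.exp ((lam0 + (n : ℂ) * ω) * (x : ℂ))) := by
  have hsum := sum_pow_mul_exp_mul_weight_mul_equidistantBernstein hne ht hc
  refine ⟨fun x => ?_, fun x => ?_⟩
  · have hE1 : Complex.exp (ω * (b - a)) - 1 ≠ 0 := sub_ne_zero.mpr hne
    have hsum₁ := hsum 1 x
    simp only [one_pow, one_mul] at hsum₁
    rw [hsum₁, ← add_div, sub_add_sub_cancel', div_self hE1, one_pow, mul_one]
  · set E := Complex.exp (ω * (b - a))
    set X := Complex.exp (ω * (x - a))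
    have hnode : ∀ k ∈ Finset.range (n + 1),
        Complex.exp ((lam0 + n * ω) * t k) =
          Complex.exp (n * ω * a) * E ^ k * Complex.exp (lam0 * t k) := by
      intro k hk
      rw [← Complex.exp_nat_mul, ← Complex.exp_add, ← Complex.exp_add, ht]
      have := natCast_mul_div_natCast_of_le (K := ℂ) (Finset.mem_range_succ_iff.mp hk)
      congr 1
      push_cast
      linear_combination ω * (b - a) * this
    have hX : E * ((X - 1) / (E - 1)) + (E - X) / (E - 1) = X := by
      field_simp; ring
    calc _ = ∑ k ∈ Finset.range (n + 1), Complex.exp (n * ω * a) *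
            (E ^ k * (Complex.exp (lam0 * t k) * c k * equidistantBernstein n lam0 ω a b k x)) :=
          Finset.sum_congr rfl fun k hk => by rw [hnode k hk]; ring
      _ = Complex.exp (n * ω * a) * (Complex.exp (lam0 * x) * X ^ n) := by
          rw [← Finset.mul_sum, hsum, hX]
      _ = _ := by
          rw [← Complex.exp_nat_mul, ← Complex.exp_add, ← Complex.exp_add]; ring_nf

/-- **Proposition (Morigi–Neamtu operator).**  Let `λ_j = λ_0 + jω`, `j = 0,…,n`,
`ω ≠ 0`, with the explicit equidistant Bernstein basis `p_{n,k}` for `a ≠ b`, and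
set `t_k = a + (k/n)(b−a)`.  Then the operator
`B f (x) = ∑_{k=0}^n f(t_k) (n!/(n−k)!) (ω^k e^{−λ_0 (k/n)(b−a)} /
(e^{ω(b−a)} − 1)^k) p_{n,k}(x)` satisfies `B e^{λ_0 x} = e^{λ_0 x}` and
`B e^{λ_n x} = e^{λ_n x}`. -/
theorem equidistant_bernstein_operator_reproduces
    (n : ℕ) (hn : 0 < n) (lam0 ω : ℂ) (hω : ω ≠ 0) (a b : ℝ) (hab : a ≠ b)
    (hne : Complex.exp (ω * ((b : ℂ) - (a : ℂ))) ≠ 1)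
    (t : ℕ → ℝ) (ht : ∀ k, t k = a + ((k : ℝ) / (n : ℝ)) * (b - a))
    (c : ℕ → ℂ)
    (hc : ∀ k, c k = ((n.factorial : ℂ) / ((n - k).factorial : ℂ)) *
      (ω ^ k * Complex.exp (-lam0 * ((((k : ℝ) / (n : ℝ)) * (b - a) : ℝ) : ℂ)) /
        (Complex.exp (ω * ((b : ℂ) - (a : ℂ))) - 1) ^ k)) :
    (∀ x : ℝ, ∑ k ∈ Finset.range (n + 1),
        Complex.exp (lam0 * ((t k : ℝ) : ℂ)) * c k * equidistantBernstein n lam0 ω a b k x =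
      Complex.exp (lam0 * (x : ℂ))) ∧
    (∀ x : ℝ, ∑ k ∈ Finset.range (n + 1),
        Complex.exp ((lam0 + (n : ℂ) * ω) * ((t k : ℝ) : ℂ)) * c k *
          equidistantBernstein n lam0 ω a b k x =
      Complex.exp ((lam0 + (n : ℂ) * ω) * (x : ℂ))) :=
  equidistant_bernstein_operator_reproduces_general n lam0 ω a b hne t ht c hc
end
end
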